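/- Let K be an infinite field. Then at most one of the following three conditions holds: (i) there is a henselian valuation ring on K whose residue field is algebraically closed; (ii) there is a henselian valuation ring on K whose residue field is finite; (iii) there is a henselian valuation ring on K whose residue field is real closed. -/

import Mathlib

/-!
A henselian valuation ring whose residue characteristic does not divide `n` identifies the
`n`-th roots of unity of `K` with those of its residue field: the roots of `X ^ n - 1` are simple
there, so they lift uniquely. For a prime `ℓ` exceeding the characteristics involved and the size
of a finite residue field, an algebraically closed residue field has `ℓ` such roots and the finite
one fewer, so (i) and (ii) exclude each other.

If some valuation ring of `K` has a formally real residue field then `K` is formally real: the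
unit part of a nonzero sum of squares reduces to a nonzero sum of squares. A henselian valuation
ring of a formally real field in turn has a formally real residue field: residue characteristic
`2` would make `-7` a square, and otherwise a relation `-1 = ∑ bᵢ²` lifts. Real closed fields are
formally real, algebraically closed and finite fields are not; this excludes (iii) together with
(i) or (ii).
-/

/-- A field `k` is real closed: there is a linear order on `k` making it a
linearly ordered field in which every nonnegative element is a square and
every polynomial of odd degree has a root. -/
def IsRealClosedField (k : Type*) [Field k] : Prop :=
  ∃ le : k → k → Prop,
    IsLinearOrder k le ∧
    (∀ a b c : k, le a b → le (a + c) (b + c)) ∧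
    (∀ a b : k, le 0 a → le 0 b → le 0 (a * b)) ∧
    (∀ a : k, le 0 a → ∃ b : k, b ^ 2 = a) ∧
    (∀ p : Polynomial k, Odd p.natDegree → ∃ x : k, p.eval x = 0)

open Polynomial IsLocalRing

theorem IsSumSq.map {R S F : Type*} [NonAssocSemiring R] [NonAssocSemiring S] [FunLike F R S]
    [RingHomClass F R S] (f : F) {s : R} (hs : IsSumSq s) : IsSumSq (f s) := by
  induction hs with
  | zero => simp
  | sq_add a _ ih => simpa using IsSumSq.sq_add (f a) ih

theorem IsSumSq.exists_isSumSq_of_surjective {R S : Type*} [Semiring R] [Semiring S]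
    {f : R →+* S} (hf : Function.Surjective f) {s : S} (hs : IsSumSq s) :
    ∃ t, IsSumSq t ∧ f t = s := by
  induction hs with
  | zero => exact ⟨0, .zero, map_zero f⟩
  | sq_add a _ ih =>
    obtain ⟨t, ht, rfl⟩ := ih
    obtain ⟨b, rfl⟩ := hf a
    exact ⟨b * b + t, .sq_add b ht, by simp⟩

theorem IsFormallyReal.of_injective {R S : Type*} [Ring R] [Ring S] [IsFormallyReal S]
    {f : R →+* S} (hf : Function.Injective f) : IsFormallyReal R :=
  of_eq_zero_of_eq_zero_of_mul_self_add fun {s a} hs h => by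
    have hsq : f a * f a = 0 :=
      eq_zero_of_add_right (.mul_self (f a)) (hs.map f) (by rw [← map_mul, ← map_add, h, map_zero])
    exact hf <| by rw [map_zero]; exact IsReduced.eq_zero _ ⟨2, by rwa [sq]⟩

theorem IsFormallyReal.charZero {R : Type*} [Ring R] [Nontrivial R] [IsFormallyReal R] :
    CharZero R :=
  charZero_of_inj_zero fun n hn => by
    cases n with
    | zero => rfl
    | succ n =>
      rw [Nat.cast_succ, add_comm] at hn
      exact absurd (IsFormallyReal.eq_zero_of_add_right .one (.natCast n) hn) one_ne_zero

theorem IsAlgClosed.not_isFormallyReal (k : Type*) [Field k] [IsAlgClosed k] :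
    ¬ IsFormallyReal k := fun _ => by
  obtain ⟨i, hi⟩ := IsAlgClosed.exists_pow_nat_eq (-1 : k) two_pos
  have : i * i + 1 = 0 := by rw [← sq, hi, neg_add_cancel]
  exact one_ne_zero (IsFormallyReal.eq_zero_of_add_left (IsSumSq.mul_self i) IsSumSq.one this)

theorem IsRealClosedField.isFormallyReal {k : Type*} [Field k] (h : IsRealClosedField k) :
    IsFormallyReal k := by
  obtain ⟨le, hle, hadd, hmul, -, -⟩ := h
  have nonneg_mul_self (a : k) : le 0 (a * a) := by
    rcases hle.total 0 a with ha | ha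
    · exact hmul a a ha ha
    · have hna : le 0 (-a) := by simpa using hadd a 0 (-a) ha
      simpa using hmul _ _ hna hna
  have nonneg_of_isSumSq {s : k} (hs : IsSumSq s) : le 0 s := by
    induction hs with
    | zero => exact hle.refl 0
    | sq_add a _ ih =>
      exact hle.trans _ _ _ (nonneg_mul_self a) (by simpa [add_comm] using hadd 0 _ (a * a) ih)
  refine .of_eq_zero_of_eq_zero_of_mul_self_add fun {s a} hs h => ?_
  have hs0 : s = 0 := hle.antisymm _ _
    (by simpa [← h] using hadd 0 _ (-(a * a)) (nonneg_mul_self a)) (nonneg_of_isSumSq hs)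
  simpa [hs0] using h

theorem IsLocalRing.injective_restrictRootsOfUnity_residue {R : Type*} [CommRing R]
    [IsLocalRing R] {n : ℕ} (hn : (n : ResidueField R) ≠ 0) :
    Function.Injective (restrictRootsOfUnity (residue R) n) := by
  have hroot (ζ : rootsOfUnity n R) : (X ^ n - C 1 : R[X]).eval ((ζ : Rˣ) : R) = 0 := by
    simp [← Units.val_pow_eq_pow_val, (mem_rootsOfUnity n _).mp ζ.2]
  intro ζ η h
  have hres : residue R (ζ : Rˣ) = residue R (η : Rˣ) :=
    congrArg (fun ξ : rootsOfUnity n (ResidueField R) => (ξ : (ResidueField R)ˣ).val) h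
  refine Subtype.ext <| Units.ext <| eq_of_eval_eq_zero_of_not_isUnit_sub (hroot ζ) (hroot η)
    (by rw [← residue_ne_zero_iff_isUnit, map_sub, hres, sub_self, not_not]) ?_
  have hn' : IsUnit (n : R) := (residue_ne_zero_iff_isUnit _).mp (by simpa using hn)
  simpa [derivative_X_pow] using hn'.mul ((ζ : Rˣ).isUnit.pow (n - 1))

namespace HenselianLocalRing
variable {R : Type*} [CommRing R] [HenselianLocalRing R]

theorem exists_isRoot_residue_eq {f : R[X]} (hf : f.Monic) {a₀ : ResidueField R}
    (h : aeval a₀ f = 0) (h' : aeval a₀ (derivative f) ≠ 0) :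
    ∃ a : R, f.IsRoot a ∧ residue R a = a₀ := by
  have := (HenselianLocalRing.TFAE R).out 0 1
  exact this.mp ‹_› f hf a₀ h h'

theorem exists_mul_self_eq_of_residue_eq (h2 : (2 : ResidueField R) ≠ 0) {x : R}
    {b : ResidueField R} (hb : b ≠ 0) (hx : residue R x = b * b) :
    ∃ c : R, c * c = x ∧ residue R c = b := by
  obtain ⟨c, hc, rfl⟩ := exists_isRoot_residue_eq (f := X ^ 2 - C x)
    (monic_X_pow_sub_C x two_ne_zero) (a₀ := b) (by simp [hx, sq])
    (by simpa [hb, map_ofNat, one_add_one_eq_two, -residue_eq_zero_iff] using h2)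
  exact ⟨c, by simpa [sq, sub_eq_zero] using hc, rfl⟩

theorem two_ne_zero_residueField [IsFormallyReal R] : (2 : ResidueField R) ≠ 0 := by
  intro h2
  obtain ⟨r, hr, -⟩ := exists_isRoot_residue_eq (f := X ^ 2 + X + C (2 : R)) (by monicity!)
    (a₀ := 0) (by simpa [-residue_eq_zero_iff, map_ofNat] using h2) (by simp)
  have h7 : 1 + ((2 * r + 1) * (2 * r + 1) + 6) = 0 := by
    linear_combination (4 : R) * (by simpa using hr.eq_zero : r ^ 2 + r + 2 = 0)
  have h6 : IsSumSq (6 : R) := by exact_mod_cast IsSumSq.natCast 6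
  exact one_ne_zero (IsFormallyReal.eq_zero_of_add_right IsSumSq.one
    ((IsSumSq.mul_self _).add h6) h7)

theorem isFormallyReal_residueField [IsFormallyReal R] : IsFormallyReal (ResidueField R) := by
  refine .of_eq_zero_of_eq_zero_of_mul_self_add fun {s a} hs h => ?_
  by_contra ha
  have hneg : IsSumSq (-1 : ResidueField R) := by
    have : -1 = (a⁻¹ * a⁻¹) * s := by field_simp; linear_combination -h
    exact this ▸ (IsSumSq.mul_self _).mul hs
  obtain ⟨t, ht, hres⟩ := hneg.exists_isSumSq_of_surjective residue_surjective
  obtain ⟨c, hc, hc1⟩ := exists_mul_self_eq_of_residue_eq two_ne_zero_residueField one_ne_zero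
    (x := -t) (by simp [hres])
  have := IsFormallyReal.eq_zero_of_add_right (IsSumSq.mul_self c) ht (by rw [hc, neg_add_cancel])
  simpa [hc1] using congrArg (residue R) this

theorem surjective_restrictRootsOfUnity_residue {n : ℕ} (hn : (n : ResidueField R) ≠ 0) :
    Function.Surjective (restrictRootsOfUnity (residue R) n) := by
  have : NeZero n := ⟨by rintro rfl; simp at hn⟩
  intro ξ
  have hξ : (ξ : (ResidueField R)ˣ).val ^ n = 1 := by
    simp [← Units.val_pow_eq_pow_val, (mem_rootsOfUnity n _).mp ξ.2]
  obtain ⟨a, ha, hres⟩ := exists_isRoot_residue_eq (f := X ^ n - C 1)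
    (monic_X_pow_sub_C 1 (NeZero.ne n)) (a₀ := (ξ : (ResidueField R)ˣ).val)
    (by simp [hξ]) (by simp [derivative_X_pow, hn])
  have ha1 : a ^ n = 1 := by simpa [sub_eq_zero] using ha.eq_zero
  exact ⟨rootsOfUnity.mkOfPowEq a ha1, by ext; simp [hres]⟩

end HenselianLocalRing

namespace ValuationSubring
variable {K : Type*} [Field K] (O : ValuationSubring K)

theorem exists_eq_sq_mul_of_isSumNonzeroSq [IsFormallyReal (ResidueField O)] {s : K}
    (hs : IsSumNonzeroSq s) : ∃ (y : K) (u : O), y ≠ 0 ∧ s = y ^ 2 * u ∧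
      IsSumSq (residue O u) ∧ residue O u ≠ 0 := by
  induction hs with
  | @sq a ha => exact ⟨a, 1, ha, by simp [sq], by simp, one_ne_zero⟩
  | @sq_add a s ha _ ih =>
    obtain ⟨y, u, hy, rfl, hu, hu0⟩ := ih
    rcases O.mem_or_inv_mem (a / y) with hay | hya
    · set b : O := ⟨a / y, hay⟩
      refine ⟨y, b * b + u, hy, ?_, ?_, ?_⟩
      · push_cast [b]
        field_simp
      · rw [map_add, map_mul]
        exact (IsSumSq.mul_self _).add hu
      · rw [map_add, map_mul]
        exact fun h => hu0 (IsFormallyReal.eq_zero_of_add_left (.mul_self _) hu h)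
    · set b : O := ⟨y / a, by rwa [inv_div] at hya⟩
      refine ⟨a, 1 + b * b * u, ha, ?_, ?_, ?_⟩
      · push_cast [b]
        field_simp
      · rw [map_add, map_mul, map_mul, map_one]
        exact IsSumSq.one.add ((IsSumSq.mul_self _).mul hu)
      · rw [map_add, map_mul, map_mul, map_one]
        exact fun h => one_ne_zero
          (IsFormallyReal.eq_zero_of_add_right .one ((IsSumSq.mul_self _).mul hu) h)

theorem isFormallyReal_of_residueField [IsFormallyReal (ResidueField O)] : IsFormallyReal K where
  not_isSumNonzeroSq_zero h := by
    obtain ⟨y, u, hy, h0, -, hu0⟩ := O.exists_eq_sq_mul_of_isSumNonzeroSq h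
    have hu : u = 0 := Subtype.ext (by simpa [hy] using h0.symm)
    exact hu0 (by rw [hu, map_zero])

theorem isFormallyReal_residueField (O' : ValuationSubring K)
    [HenselianLocalRing O] [IsFormallyReal (ResidueField O')] :
    IsFormallyReal (ResidueField O) :=
  have := O'.isFormallyReal_of_residueField
  have := IsFormallyReal.of_injective (f := O.subtype) Subtype.val_injective
  HenselianLocalRing.isFormallyReal_residueField

theorem bijective_restrictRootsOfUnity_subtype {n : ℕ} [NeZero n] :
    Function.Bijective (restrictRootsOfUnity O.subtype n) := by
  refine ⟨fun ζ η h => ?_, fun ξ => ?_⟩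
  · exact Subtype.ext <| Units.ext <| Subtype.ext <|
      congrArg (fun ξ : rootsOfUnity n K => (ξ : Kˣ).val) h
  · have hξ : (ξ : Kˣ).val ^ n = 1 := by
      simp [← Units.val_pow_eq_pow_val, (mem_rootsOfUnity n _).mp ξ.2]
    have hv : O.valuation (ξ : Kˣ).val = 1 :=
      (pow_eq_one_iff_left (NeZero.ne n)).mp (by rw [← map_pow, hξ, map_one])
    have hmem : (ξ : Kˣ).val ∈ O := (O.valuation_le_one_iff _).mp hv.le
    exact ⟨rootsOfUnity.mkOfPowEq ⟨_, hmem⟩ (Subtype.ext (by simpa using hξ)), by ext; simp⟩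

theorem natCard_rootsOfUnity_residueField [HenselianLocalRing O] {n : ℕ}
    (hn : (n : ResidueField O) ≠ 0) :
    Nat.card (rootsOfUnity n (ResidueField O)) = Nat.card (rootsOfUnity n K) := by
  have : NeZero n := ⟨by rintro rfl; simp at hn⟩
  rw [← Nat.card_congr (Equiv.ofBijective _ ⟨injective_restrictRootsOfUnity_residue hn,
      HenselianLocalRing.surjective_restrictRootsOfUnity_residue hn⟩),
    Nat.card_congr (Equiv.ofBijective _ O.bijective_restrictRootsOfUnity_subtype)]

theorem infinite_residueField_of_isAlgClosed (O₁ O₂ : ValuationSubring K) [HenselianLocalRing O₁]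
    [HenselianLocalRing O₂] [IsAlgClosed (ResidueField O₁)] : Infinite (ResidueField O₂) := by
  by_contra hfin
  rw [not_infinite_iff_finite] at hfin
  obtain ⟨ℓ, hN, hℓ⟩ := Nat.exists_infinite_primes
    (ringChar (ResidueField O₁) + ringChar (ResidueField O₂) + Nat.card (ResidueField O₂) + 1)
  have h₁ : NeZero (ℓ : ResidueField O₁) := ⟨CharP.cast_ne_zero_of_ne_of_prime _ hℓ (by omega)⟩
  have h₂ : (ℓ : ResidueField O₂) ≠ 0 := CharP.cast_ne_zero_of_ne_of_prime _ hℓ (by omega)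
  have : NeZero ℓ := ⟨hℓ.ne_zero⟩
  have hcard := (O₁.natCard_rootsOfUnity_residueField h₁.out).trans
    (O₂.natCard_rootsOfUnity_residueField h₂).symm
  rw [HasEnoughRootsOfUnity.natCard_rootsOfUnity] at hcard
  have := Nat.card_le_card_of_injective
    (fun ζ : rootsOfUnity ℓ (ResidueField O₂) => ((ζ : (ResidueField O₂)ˣ) : ResidueField O₂))
    fun _ _ h => Subtype.ext (Units.ext h)
  omega

end ValuationSubring

theorem trichotomy_mutually_exclusive_general
    (K : Type*) [Field K] :
    ¬ ((∃ O : ValuationSubring K, HenselianLocalRing O ∧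
          IsAlgClosed (IsLocalRing.ResidueField O)) ∧
       (∃ O : ValuationSubring K, HenselianLocalRing O ∧
          Finite (IsLocalRing.ResidueField O))) ∧
    ¬ ((∃ O : ValuationSubring K, HenselianLocalRing O ∧
          IsAlgClosed (IsLocalRing.ResidueField O)) ∧
       (∃ O : ValuationSubring K, HenselianLocalRing O ∧
          IsRealClosedField (IsLocalRing.ResidueField O))) ∧
    ¬ ((∃ O : ValuationSubring K, HenselianLocalRing O ∧
          Finite (IsLocalRing.ResidueField O)) ∧
       (∃ O : ValuationSubring K, HenselianLocalRing O ∧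
          IsRealClosedField (IsLocalRing.ResidueField O))) := by
  refine ⟨?_, ?_, ?_⟩
  · rintro ⟨⟨O₁, _, _⟩, ⟨O₂, _, hfin⟩⟩
    exact not_finite_iff_infinite.mpr (O₁.infinite_residueField_of_isAlgClosed O₂) hfin
  · rintro ⟨⟨O₁, _, _⟩, ⟨O₂, -, hrc⟩⟩
    have := hrc.isFormallyReal
    exact IsAlgClosed.not_isFormallyReal _ (O₁.isFormallyReal_residueField O₂)
  · rintro ⟨⟨O₁, _, _⟩, ⟨O₂, -, hrc⟩⟩
    have := hrc.isFormallyReal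
    have := O₁.isFormallyReal_residueField O₂
    have := IsFormallyReal.charZero (R := ResidueField O₁)
    exact not_finite (ResidueField O₁)

/-- An infinite field is at most one of: ACVF-like, pCF-like, RCVF-like. -/
theorem trichotomy_mutually_exclusive
    (K : Type*) [Field K] [Infinite K] :
    ¬ ((∃ O : ValuationSubring K, HenselianLocalRing O ∧
          IsAlgClosed (IsLocalRing.ResidueField O)) ∧
       (∃ O : ValuationSubring K, HenselianLocalRing O ∧
          Finite (IsLocalRing.ResidueField O))) ∧
    ¬ ((∃ O : ValuationSubring K, HenselianLocalRing O ∧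
          IsAlgClosed (IsLocalRing.ResidueField O)) ∧
       (∃ O : ValuationSubring K, HenselianLocalRing O ∧
          IsRealClosedField (IsLocalRing.ResidueField O))) ∧
    ¬ ((∃ O : ValuationSubring K, HenselianLocalRing O ∧
          Finite (IsLocalRing.ResidueField O)) ∧
       (∃ O : ValuationSubring K, HenselianLocalRing O ∧
          IsRealClosedField (IsLocalRing.ResidueField O))) :=
  trichotomy_mutually_exclusive_general K
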